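/- Let a ∈ (0,∞), let P be a finite subset of (0,a), and let S : ℝ → ℝ satisfy conditions (S1)–(S4): (S1) S(−x) = −S(x) and S(a+x) = −S(x) for x ∈ [0,∞); (S2) 0 < S(x) < x for x ∈ (0,a); (S3) S ∈ C([0,a]) ∩ C¹([0,a)) ∩ C²([0,a) \ P); (S4) S'(x)² − S''(x)·S(x) ≥ 1 for x ∈ [0,a) \ P. Then for all x ∈ (0,a), the strict inequality (a² − x²)/(a² + x²) < S(x)/x holds. -/

import Mathlib

/-!
Compare `S` with `R x = x (a² - x²) / (a² + x²)`, for which `R'² - R R'' < 1` on `(0, a)`.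
Where `S ≤ R`, the second derivative of `log S - log R`,
`(S''S - S'²)/S² - (R''R - R'²)/R² < 1/R² - 1/S² ≤ 0`, is negative nearby (off `P`), so
`S / R` has no local minimum `≤ 1`. Yet unless `R < S` throughout, `S / R` attains a minimum
`≤ 1` on `(0, a)`: `S / R → 1` at `0` because `S'(0) = R'(0) = 1`, and `S / R` is eventually
`≥ q` at `a` for every `q < 1`, because `R x ≤ a - x` while `S' ≤ -q` near `a`. The latter
holds because `S'/S` decreases, so `S` is eventually decreasing, and then `(S'² - 1)/S²`
increases, giving `S'² ≥ 1 + O(S²)`.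
-/

open Real Set Filter Topology

section FiniteExceptions

variable {f : ℝ → ℝ} {D T : Set ℝ}

theorem antitoneOn_of_deriv_nonpos_off_finite (hD : Convex ℝ D) (hT : T.Finite)
    (hf : ContinuousOn f D) (hf' : ∀ x ∈ interior D \ T, DifferentiableAt ℝ f x)
    (hf'_nonpos : ∀ x ∈ interior D \ T, deriv f x ≤ 0) : AntitoneOn f D := by
  induction T, hT using Set.Finite.induction_on generalizing D with
  | empty =>
    exact antitoneOn_of_deriv_nonpos hD hf
      (fun x hx => (hf' x ⟨hx, id⟩).differentiableWithinAt) fun x hx => hf'_nonpos x ⟨hx, id⟩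
  | @insert t T _ _ ih =>
    have hpiece : ∀ E ⊆ D, Convex ℝ E → t ∉ interior E → AntitoneOn f E := by
      intro E hED hE htE
      have hsub : interior E \ T ⊆ interior D \ insert t T := fun x hx =>
        ⟨interior_mono hED hx.1, by rintro (rfl | h); exacts [htE hx.1, hx.2 h]⟩
      exact ih hE (hf.mono hED) (fun x hx => hf' x (hsub hx))
        fun x hx => hf'_nonpos x (hsub hx)
    by_cases htD : t ∈ D
    · rw [← inter_univ D, ← Iic_union_Ici (a := t), inter_union_distrib_left]
      refine AntitoneOn.union_right
        (hpiece _ inter_subset_left (hD.inter (convex_Iic t)) fun ht => ?_)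
        (hpiece _ inter_subset_left (hD.inter (convex_Ici t)) fun ht => ?_)
        ⟨⟨htD, self_mem_Iic⟩, fun _ hx => hx.2⟩ ⟨⟨htD, self_mem_Ici⟩, fun _ hx => hx.2⟩
      · simpa using interior_mono inter_subset_right ht
      · simpa using interior_mono inter_subset_right ht
    · exact hpiece D subset_rfl hD fun ht => htD (interior_subset ht)

theorem monotoneOn_of_deriv_nonneg_off_finite (hD : Convex ℝ D) (hT : T.Finite)
    (hf : ContinuousOn f D) (hf' : ∀ x ∈ interior D \ T, DifferentiableAt ℝ f x)
    (hf'_nonneg : ∀ x ∈ interior D \ T, 0 ≤ deriv f x) : MonotoneOn f D := by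
  have := antitoneOn_of_deriv_nonpos_off_finite hD hT hf.neg (fun x hx => (hf' x hx).neg)
    fun x hx => by simpa [deriv.neg] using hf'_nonneg x hx
  exact fun x hx y hy hxy => neg_le_neg_iff.1 (this hx hy hxy)

theorem strictAntiOn_of_deriv_neg_off_finite (hD : Convex ℝ D) (hT : T.Finite)
    (hf : ContinuousOn f D) (hf' : ∀ x ∈ interior D \ T, deriv f x < 0) :
    StrictAntiOn f D := by
  have hanti := antitoneOn_of_deriv_nonpos_off_finite hD hT hf
    (fun x hx => differentiableAt_of_deriv_ne_zero (hf' x hx).ne) fun x hx => (hf' x hx).le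
  intro x hx y hy hxy
  refine (hanti hx hy hxy.le).lt_of_ne' fun hfxy => ?_
  -- `f` is then constant on `(x, y)`, so `f'` vanishes at a point of `(x, y) \ T`.
  have hxyD : Ioo x y ⊆ interior D := by
    simpa using interior_mono (hD.ordConnected.out hx hy)
  have hconst : ∀ z ∈ Ioo x y, f z = f x := fun z hz => le_antisymm
    (hanti hx (interior_subset (hxyD hz)) hz.1.le)
    (hfxy ▸ hanti (interior_subset (hxyD hz)) hy hz.2.le)
  obtain ⟨z, hz, hzT⟩ := ((Ioo_infinite hxy).sdiff hT).nonempty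
  have hlocal : f =ᶠ[𝓝 z] fun _ => f x := eventually_of_mem (isOpen_Ioo.mem_nhds hz) hconst
  have hz0 : deriv f z = 0 := by rw [hlocal.deriv_eq, deriv_const]
  exact (hf' z ⟨hxyD hz, hzT⟩).ne hz0

theorem not_isLocalMin_of_eventually_deriv_deriv_neg {f f' : ℝ → ℝ} {m : ℝ} (hT : T.Finite)
    (hf : ∀ᶠ x in 𝓝 m, HasDerivAt f (f' x) x) (hf' : ∀ᶠ x in 𝓝 m, ContinuousAt f' x)
    (hf'' : ∀ᶠ x in 𝓝 m, x ∉ T → deriv f' x < 0) : ¬ IsLocalMin f m := by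
  intro hmin
  obtain ⟨u, hmu, hu⟩ := mem_nhdsGE_iff_exists_Icc_subset.1
    (nhdsWithin_le_nhds (hf.and (hf'.and (hf''.and hmin))))
  have hf'm : f' m = 0 := hmin.hasDerivAt_eq_zero (hu (left_mem_Icc.2 hmu.le)).1
  have hf'anti : StrictAntiOn f' (Icc m u) :=
    strictAntiOn_of_deriv_neg_off_finite (convex_Icc m u) hT
      (fun x hx => (hu hx).2.1.continuousWithinAt)
      fun x hx => (hu (interior_subset hx.1)).2.2.1 hx.2
  have hfanti : StrictAntiOn f (Icc m u) := by
    refine strictAntiOn_of_deriv_neg (convex_Icc m u)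
      (fun x hx => (hu hx).1.continuousAt.continuousWithinAt) fun x hx => ?_
    rw [interior_Icc] at hx
    rw [(hu (Ioo_subset_Icc_self hx)).1.deriv, ← hf'm]
    exact hf'anti (left_mem_Icc.2 hmu.le) (Ioo_subset_Icc_self hx) hx.1
  exact (hfanti (left_mem_Icc.2 hmu.le) (right_mem_Icc.2 hmu.le) hmu).not_ge
    (hu (right_mem_Icc.2 hmu.le)).2.2.2

end FiniteExceptions

theorem HasDerivAt.tendsto_div_self {f : ℝ → ℝ} {c : ℝ} (hf : HasDerivAt f c 0) (h0 : f 0 = 0) :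
    Tendsto (fun x => f x / x) (𝓝[≠] 0) (𝓝 c) :=
  (hasDerivAt_iff_tendsto_slope.1 hf).congr fun x => by simp [slope_def_field, h0]

theorem hasDerivAt_one_of_one_le_sq_deriv {f : ℝ → ℝ} (h0 : f 0 = 0)
    (hf : ∀ᶠ x in 𝓝[>] 0, 0 ≤ f x ∧ f x ≤ x) (hd : 1 ≤ deriv f 0 ^ 2) : HasDerivAt f 1 0 := by
  have hdiff : DifferentiableAt ℝ f 0 :=
    differentiableAt_of_deriv_ne_zero fun h => by norm_num [h] at hd
  have hlim := (hdiff.hasDerivAt.tendsto_div_self h0).mono_left (nhdsGT_le_nhdsNE 0)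
  have hslope : ∀ᶠ x in 𝓝[>] 0, 0 ≤ f x / x ∧ f x / x ≤ 1 := by
    filter_upwards [hf, self_mem_nhdsWithin] with x hx (hx0 : 0 < x)
    exact ⟨div_nonneg hx.1 hx0.le, div_le_one_of_le₀ hx.2 hx0.le⟩
  have h1 : deriv f 0 ≤ 1 := le_of_tendsto hlim (hslope.mono fun _ hx => hx.2)
  have h2 : 0 ≤ deriv f 0 := ge_of_tendsto hlim (hslope.mono fun _ hx => hx.1)
  have : deriv f 0 = 1 := by nlinarith
  exact this ▸ hdiff.hasDerivAt

theorem hasDerivAt_deriv_div_self {f : ℝ → ℝ} {x : ℝ} (hf : HasDerivAt f (deriv f x) x)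
    (hf' : HasDerivAt (deriv f) (deriv (deriv f) x) x) (hx : f x ≠ 0) :
    HasDerivAt (fun y => deriv f y / f y)
      ((deriv (deriv f) x * f x - deriv f x ^ 2) / f x ^ 2) x :=
  (hf'.div hf hx).congr_deriv (by ring)

theorem ContinuousOn.exists_isMinOn_Ioo {f : ℝ → ℝ} {u v c : ℝ} (hf : ContinuousOn f (Ioo u v))
    (hc : c ∈ Ioo u v) (hu : ∀ᶠ x in 𝓝[>] u, f c < f x) (hv : ∀ᶠ x in 𝓝[<] v, f c < f x) :
    ∃ m ∈ Ioo u v, IsMinOn f (Ioo u v) m := by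
  obtain ⟨u', hu', huu'⟩ := mem_nhdsGT_iff_exists_Ioc_subset.1 hu
  obtain ⟨v', hv', hvv'⟩ := mem_nhdsLT_iff_exists_Ico_subset.1 hv
  have hK : Icc (min u' c) (max v' c) ⊆ Ioo u v :=
    Icc_subset_Ioo (lt_min hu' hc.1) (max_lt hv' hc.2)
  have hcK : c ∈ Icc (min u' c) (max v' c) := ⟨min_le_right _ _, le_max_right _ _⟩
  obtain ⟨m, hmK, hmin⟩ := isCompact_Icc.exists_isMinOn ⟨c, hcK⟩ (hf.mono hK)
  refine ⟨m, hK hmK, fun x hx => ?_⟩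
  by_cases hxK : x ∈ Icc (min u' c) (max v' c)
  · exact hmin hxK
  refine (show f m ≤ f c from hmin hcK).trans (le_of_lt ?_)
  rcases not_and_or.1 hxK with hx' | hx'
  · exact huu' ⟨hx.1, (not_le.1 hx').le.trans (min_le_left _ _)⟩
  · exact hvv' ⟨(le_max_left _ _).trans (not_le.1 hx').le, hx.2⟩

noncomputable def redhefferBound (a x : ℝ) : ℝ := x * ((a ^ 2 - x ^ 2) / (a ^ 2 + x ^ 2))

section redhefferBound

variable {a x : ℝ}

theorem hasDerivAt_redhefferBound (ha : a ≠ 0) (x : ℝ) :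
    HasDerivAt (redhefferBound a)
      ((a ^ 4 - 4 * a ^ 2 * x ^ 2 - x ^ 4) / (a ^ 2 + x ^ 2) ^ 2) x := by
  have hx : a ^ 2 + x ^ 2 ≠ 0 := by positivity
  refine ((hasDerivAt_id' x).mul (((hasDerivAt_pow 2 x).const_sub (a ^ 2)).div
    ((hasDerivAt_pow 2 x).const_add (a ^ 2)) hx)).congr_deriv ?_
  simp only [Pi.div_apply]
  field_simp
  ring

theorem hasDerivAt_deriv_redhefferBound (ha : a ≠ 0) (x : ℝ) :
    HasDerivAt (deriv (redhefferBound a))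
      (4 * a ^ 2 * x * (x ^ 2 - 3 * a ^ 2) / (a ^ 2 + x ^ 2) ^ 3) x := by
  rw [funext fun y => (hasDerivAt_redhefferBound ha y).deriv]
  have hx : (a ^ 2 + x ^ 2) ^ 2 ≠ 0 := by positivity
  refine ((((hasDerivAt_const x (a ^ 4)).sub ((hasDerivAt_pow 2 x).const_mul (4 * a ^ 2))).sub
    (hasDerivAt_pow 4 x)).div (((hasDerivAt_pow 2 x).const_add (a ^ 2)).pow 2) hx).congr_deriv ?_
  simp only [Pi.sub_apply, Pi.pow_apply]
  field_simp
  ring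

theorem contDiff_redhefferBound (ha : a ≠ 0) : ContDiff ℝ 2 (redhefferBound a) :=
  contDiff_id.mul <| (by fun_prop : ContDiff ℝ 2 fun x : ℝ => a ^ 2 - x ^ 2).div
    (by fun_prop) fun x => by positivity

theorem hasDerivAt_redhefferBound_zero (ha : a ≠ 0) : HasDerivAt (redhefferBound a) 1 0 := by
  convert hasDerivAt_redhefferBound ha 0 using 1
  field_simp
  ring

theorem redhefferBound_pos (hx : x ∈ Ioo 0 a) : 0 < redhefferBound a x := by
  have : x ^ 2 < a ^ 2 := pow_lt_pow_left₀ hx.2 hx.1.le two_ne_zero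
  have hx0 := hx.1
  exact mul_pos hx.1 (div_pos (by linarith) (by positivity))

theorem redhefferBound_le_sub (ha : 0 < a) (x : ℝ) : redhefferBound a x ≤ a - x := by
  rw [redhefferBound, ← mul_div_assoc, div_le_iff₀ (by positivity)]
  nlinarith [mul_nonneg ha.le (sq_nonneg (a - x))]

theorem deriv_sq_sub_deriv_deriv_mul_redhefferBound_lt_one (hx : x ∈ Ioo 0 a) :
    deriv (redhefferBound a) x ^ 2 - deriv (deriv (redhefferBound a)) x * redhefferBound a x
      < 1 := by
  have ha : 0 < a := hx.1.trans hx.2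
  have hx0 := hx.1
  have hx2 : x ^ 2 < a ^ 2 := pow_lt_pow_left₀ hx.2 hx.1.le two_ne_zero
  have hdefect : 0 < 8 * a ^ 2 * x ^ 4 * (a ^ 2 - x ^ 2) / (a ^ 2 + x ^ 2) ^ 4 :=
    div_pos (mul_pos (by positivity) (by linarith)) (by positivity)
  rw [(hasDerivAt_redhefferBound ha.ne' x).deriv,
    (hasDerivAt_deriv_redhefferBound ha.ne' x).deriv]
  have hden : a ^ 2 + x ^ 2 ≠ 0 := by positivity
  have : ((a ^ 4 - 4 * a ^ 2 * x ^ 2 - x ^ 4) / (a ^ 2 + x ^ 2) ^ 2) ^ 2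
      - 4 * a ^ 2 * x * (x ^ 2 - 3 * a ^ 2) / (a ^ 2 + x ^ 2) ^ 3 * redhefferBound a x
      = 1 - 8 * a ^ 2 * x ^ 4 * (a ^ 2 - x ^ 2) / (a ^ 2 + x ^ 2) ^ 4 := by
    rw [redhefferBound]
    field_simp
    ring
  linarith

end redhefferBound

/-- The interior part of the hypotheses (S2)–(S4). -/
structure RedhefferCondition (a : ℝ) (P : Set ℝ) (S : ℝ → ℝ) : Prop where
  finite : P.Finite
  contDiffOn_one : ContDiffOn ℝ 1 S (Ioo 0 a)
  contDiffOn_two : ContDiffOn ℝ 2 S (Ioo 0 a \ P)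
  pos : ∀ x ∈ Ioo 0 a, 0 < S x
  one_le : ∀ x ∈ Ioo 0 a \ P, 1 ≤ deriv S x ^ 2 - deriv (deriv S) x * S x

namespace RedhefferCondition

variable {a : ℝ} {P : Set ℝ} {S : ℝ → ℝ} {x : ℝ}

theorem continuousOn (hS : RedhefferCondition a P S) : ContinuousOn S (Ioo 0 a) :=
  hS.contDiffOn_one.continuousOn

theorem continuousOn_deriv (hS : RedhefferCondition a P S) : ContinuousOn (deriv S) (Ioo 0 a) :=
  hS.contDiffOn_one.continuousOn_deriv_of_isOpen isOpen_Ioo le_rfl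

theorem hasDerivAt (hS : RedhefferCondition a P S) (hx : x ∈ Ioo 0 a) :
    HasDerivAt S (deriv S x) x :=
  ((hS.contDiffOn_one.differentiableOn one_ne_zero x hx).differentiableAt
    (isOpen_Ioo.mem_nhds hx)).hasDerivAt

theorem hasDerivAt_deriv (hS : RedhefferCondition a P S) (hx : x ∈ Ioo 0 a \ P) :
    HasDerivAt (deriv S) (deriv (deriv S) x) x := by
  have hU : IsOpen (Ioo 0 a \ P) := isOpen_Ioo.sdiff hS.finite.isClosed
  exact (((hS.contDiffOn_two.deriv_of_isOpen hU (by norm_num)).differentiableOn one_ne_zero x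
    hx).differentiableAt (hU.mem_nhds hx)).hasDerivAt

theorem antitoneOn_deriv_div (hS : RedhefferCondition a P S) :
    AntitoneOn (fun x => deriv S x / S x) (Ioo 0 a) := by
  have hd : ∀ x ∈ Ioo 0 a \ P, HasDerivAt (fun y => deriv S y / S y)
      ((deriv (deriv S) x * S x - deriv S x ^ 2) / S x ^ 2) x := fun x hx =>
    hasDerivAt_deriv_div_self (hS.hasDerivAt hx.1) (hS.hasDerivAt_deriv hx) (hS.pos x hx.1).ne'
  refine antitoneOn_of_deriv_nonpos_off_finite (convex_Ioo 0 a) hS.finite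
    (hS.continuousOn_deriv.div hS.continuousOn fun x hx => (hS.pos x hx).ne') ?_ ?_ <;>
    rw [interior_Ioo]
  · exact fun x hx => (hd x hx).differentiableAt
  · intro x hx
    rw [(hd x hx).deriv]
    exact div_nonpos_of_nonpos_of_nonneg (by linarith [hS.one_le x hx]) (sq_nonneg _)

theorem exists_deriv_neg (hS : RedhefferCondition a P S) (ha : 0 < a)
    (hSa : Tendsto S (𝓝[<] a) (𝓝 0)) : ∃ b ∈ Ioo 0 a, ∀ x ∈ Ioo b a, deriv S x < 0 := by
  obtain ⟨b, hb, hSb⟩ : ∃ b ∈ Ioo 0 a, deriv S b < 0 := by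
    by_contra! h
    have hmono : MonotoneOn S (Ioo 0 a) :=
      monotoneOn_of_deriv_nonneg (convex_Ioo 0 a) hS.continuousOn
        (by simpa using hS.contDiffOn_one.differentiableOn one_ne_zero) (by simpa using h)
    have hmid : a / 2 ∈ Ioo 0 a := ⟨by linarith, by linarith⟩
    have hle : S (a / 2) ≤ 0 := ge_of_tendsto hSa <| by
      filter_upwards [Ioo_mem_nhdsLT hmid.2] with x hx
      exact hmono hmid ⟨hmid.1.trans hx.1, hx.2⟩ hx.1.le
    exact (hS.pos _ hmid).not_ge hle
  refine ⟨b, hb, fun x hx => ?_⟩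
  have hxI : x ∈ Ioo 0 a := ⟨hb.1.trans hx.1, hx.2⟩
  have hratio : deriv S x / S x < 0 :=
    (hS.antitoneOn_deriv_div hb hxI hx.1.le).trans_lt (div_neg_of_neg_of_pos hSb (hS.pos b hb))
  exact neg_of_div_neg_left hratio (hS.pos x hxI).le

theorem monotoneOn_deriv_sq_sub_one_div_sq (hS : RedhefferCondition a P S) {b : ℝ} (hb : 0 ≤ b)
    (hneg : ∀ x ∈ Ioo b a, deriv S x < 0) :
    MonotoneOn (fun x => (deriv S x ^ 2 - 1) / S x ^ 2) (Ioo b a) := by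
  have hba : Ioo b a ⊆ Ioo 0 a := Ioo_subset_Ioo_left hb
  have hd : ∀ x ∈ Ioo b a \ P, HasDerivAt (fun y => (deriv S y ^ 2 - 1) / S y ^ 2)
      (2 * deriv S x * (deriv (deriv S) x * S x - deriv S x ^ 2 + 1) / S x ^ 3) x := by
    intro x hx
    have hSx := hS.pos x (hba hx.1)
    refine ((((hS.hasDerivAt_deriv ⟨hba hx.1, hx.2⟩).fun_pow 2).sub_const 1).fun_div
      ((hS.hasDerivAt (hba hx.1)).fun_pow 2) (by positivity)).congr_deriv ?_
    field_simp
    ring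
  refine monotoneOn_of_deriv_nonneg_off_finite (convex_Ioo b a) hS.finite
    (((hS.continuousOn_deriv.mono hba).pow 2).sub continuousOn_const |>.div
      ((hS.continuousOn.mono hba).pow 2) fun x hx => pow_ne_zero 2 (hS.pos x (hba hx)).ne')
    ?_ ?_ <;> rw [interior_Ioo]
  · exact fun x hx => (hd x hx).differentiableAt
  · intro x hx
    rw [(hd x hx).deriv]
    have hSx := hS.pos x (hba hx.1)
    exact div_nonneg (mul_nonneg_of_nonpos_of_nonpos (by linarith [hneg x hx.1])
      (by linarith [hS.one_le x ⟨hba hx.1, hx.2⟩])) (by positivity)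

theorem eventually_lt_neg_deriv (hS : RedhefferCondition a P S) (ha : 0 < a)
    (hSa : Tendsto S (𝓝[<] a) (𝓝 0)) {q : ℝ} (hq : q < 1) :
    ∀ᶠ x in 𝓝[<] a, q < -deriv S x := by
  obtain ⟨b, hb, hneg⟩ := hS.exists_deriv_neg ha hSa
  have hψ := hS.monotoneOn_deriv_sq_sub_one_div_sq hb.1.le hneg
  obtain ⟨x₁, hx₁⟩ := nonempty_Ioo.2 hb.2
  set c₁ := (deriv S x₁ ^ 2 - 1) / S x₁ ^ 2
  -- `S'² ≥ 1 + c₁ S²` beyond `x₁`, and the right-hand side tends to `1`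
  have hlim : Tendsto (fun x => 1 + c₁ * S x ^ 2) (𝓝[<] a) (𝓝 1) := by
    simpa using ((hSa.pow 2).const_mul c₁).const_add 1
  have hq' : max q 0 ^ 2 < 1 := pow_lt_one₀ (le_max_right _ _) (max_lt hq one_pos) two_ne_zero
  filter_upwards [hlim.eventually_const_lt hq', Ioo_mem_nhdsLT hx₁.2] with x hx hxI
  have hSx := hS.pos x ⟨hb.1.trans (hx₁.1.trans hxI.1), hxI.2⟩
  have hsq : 1 + c₁ * S x ^ 2 ≤ deriv S x ^ 2 := by
    have := hψ hx₁ ⟨hx₁.1.trans hxI.1, hxI.2⟩ hxI.1.le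
    rw [le_div_iff₀ (by positivity)] at this
    linarith
  have hneg' := hneg x ⟨hx₁.1.trans hxI.1, hxI.2⟩
  nlinarith [le_max_left q 0, le_max_right q 0]

theorem eventually_mul_sub_le (hS : RedhefferCondition a P S) (ha : 0 < a)
    (hSa : Tendsto S (𝓝[<] a) (𝓝 0)) {q : ℝ} (hq : q < 1) :
    ∀ᶠ x in 𝓝[<] a, q * (a - x) ≤ S x := by
  obtain ⟨l, hl, hlS⟩ := mem_nhdsLT_iff_exists_Ioo_subset.1
    ((hS.eventually_lt_neg_deriv ha hSa hq).and (Ioo_mem_nhdsLT ha))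
  filter_upwards [Ioo_mem_nhdsLT hl] with x hx
  have hchord : ∀ y ∈ Ioo x a, q * (y - x) + S y ≤ S x := fun y hy => by
    have hxy : Icc x y ⊆ Ioo l a := Icc_subset_Ioo hx.1 hy.2
    have := (convex_Icc x y).image_sub_le_mul_sub_of_deriv_le (C := -q)
      (hS.continuousOn.mono fun z hz => (hlS (hxy hz)).2)
      (fun z hz => (hS.hasDerivAt (hlS (hxy (interior_subset hz))).2).differentiableAt
        |>.differentiableWithinAt)
      (fun z hz => by linarith [(hlS (hxy (interior_subset hz))).1])
      x (left_mem_Icc.2 hy.1.le) y (right_mem_Icc.2 hy.1.le) hy.1.le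
    linarith
  have hlim : Tendsto (fun y => q * (y - x) + S y) (𝓝[<] a) (𝓝 (q * (a - x) + 0)) :=
    ((tendsto_nhdsWithin_of_tendsto_nhds (tendsto_id.sub_const x)).const_mul q).add hSa
  simpa using le_of_tendsto hlim (eventually_of_mem (Ioo_mem_nhdsLT hx.2) hchord)

theorem eventually_deriv_deriv_log_sub_log_neg (hS : RedhefferCondition a P S) {R : ℝ → ℝ}
    (hR : ContDiff ℝ 2 R) {m : ℝ} (hm : m ∈ Ioo 0 a) (hRm : 0 < R m)
    (hR1 : deriv R m ^ 2 - deriv (deriv R) m * R m < 1) (hSR : S m ≤ R m) :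
    ∀ᶠ x in 𝓝 m, x ∉ P → deriv (fun x => deriv S x / S x - deriv R x / R x) x < 0 := by
  obtain ⟨hRd, -, hR'⟩ := contDiff_succ_iff_deriv (n := 1).1 hR
  have hR'd : Differentiable ℝ (deriv R) := hR'.differentiable one_ne_zero
  have hnear : ∀ᶠ x in 𝓝 m, x ∈ Ioo 0 a ∧ 0 < R x := (isOpen_Ioo.eventually_mem hm).and
    (continuousAt_const.eventually_lt hRd.continuous.continuousAt hRm)
  -- an upper bound for `(log S - log R)''` off `P` that is negative at `m`, hence near `m`
  set G : ℝ → ℝ := fun x => (deriv R x ^ 2 - deriv (deriv R) x * R x) / R x ^ 2 - 1 / S x ^ 2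
  have hSm := hS.pos m hm
  have hGm : G m < 0 := by
    have h1 : (deriv R m ^ 2 - deriv (deriv R) m * R m) / R m ^ 2 < 1 / R m ^ 2 :=
      div_lt_div_of_pos_right hR1 (by positivity)
    have h2 : 1 / R m ^ 2 ≤ 1 / S m ^ 2 :=
      one_div_le_one_div_of_le (by positivity) (pow_le_pow_left₀ hSm.le hSR 2)
    simp only [G]
    linarith
  have hGc : ContinuousAt G m := by
    have hRc := hRd.continuous.continuousAt (x := m)
    exact ((((hR'd.continuous.continuousAt.pow 2).sub
      ((hR'.continuous_deriv le_rfl).continuousAt.mul hRc)).div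
        (hRc.pow 2) (pow_ne_zero 2 hRm.ne'))).sub
      (continuousAt_const.div ((hS.hasDerivAt hm).continuousAt.pow 2) (pow_ne_zero 2 hSm.ne'))
  filter_upwards [hnear, hGc.eventually_lt continuousAt_const hGm] with x ⟨hx, hRx⟩ hGx hxP
  have hSx := hS.pos x hx
  rw [((hasDerivAt_deriv_div_self (hS.hasDerivAt hx) (hS.hasDerivAt_deriv ⟨hx, hxP⟩)
    hSx.ne').fun_sub (hasDerivAt_deriv_div_self (hRd x).hasDerivAt (hR'd x).hasDerivAt
    hRx.ne')).deriv]
  have hSbound : (deriv (deriv S) x * S x - deriv S x ^ 2) / S x ^ 2 ≤ -1 / S x ^ 2 :=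
    div_le_div_of_nonneg_right (by linarith [hS.one_le x ⟨hx, hxP⟩]) (sq_nonneg _)
  have hGx' : G x = (deriv R x ^ 2 - deriv (deriv R) x * R x) / R x ^ 2 + -1 / S x ^ 2 := by
    simp only [G]; ring
  have hRform : (deriv (deriv R) x * R x - deriv R x ^ 2) / R x ^ 2
      = -((deriv R x ^ 2 - deriv (deriv R) x * R x) / R x ^ 2) := by ring
  linarith

theorem not_isLocalMin_div (hS : RedhefferCondition a P S) {R : ℝ → ℝ} (hR : ContDiff ℝ 2 R)
    {m : ℝ} (hm : m ∈ Ioo 0 a) (hRm : 0 < R m)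
    (hR1 : deriv R m ^ 2 - deriv (deriv R) m * R m < 1) (hSR : S m ≤ R m) :
    ¬ IsLocalMin (fun x => S x / R x) m := by
  have hRd : Differentiable ℝ R := hR.differentiable two_ne_zero
  have hR'c : Continuous (deriv R) := hR.continuous_deriv one_le_two
  have hnear : ∀ᶠ x in 𝓝 m, x ∈ Ioo 0 a ∧ 0 < R x := (isOpen_Ioo.eventually_mem hm).and
    (continuousAt_const.eventually_lt hRd.continuous.continuousAt hRm)
  intro hmin
  have hlog : IsLocalMin (fun x => log (S x) - log (R x)) m := by
    filter_upwards [hmin, hnear] with x hx ⟨hxI, hRx⟩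
    rw [← log_div (hS.pos x hxI).ne' hRx.ne', ← log_div (hS.pos m hm).ne' hRm.ne']
    exact log_le_log (div_pos (hS.pos m hm) hRm) hx
  refine not_isLocalMin_of_eventually_deriv_deriv_neg hS.finite
    (f' := fun x => deriv S x / S x - deriv R x / R x) ?_ ?_
    (hS.eventually_deriv_deriv_log_sub_log_neg hR hm hRm hR1 hSR) hlog
  · filter_upwards [hnear] with x ⟨hx, hRx⟩
    exact ((hS.hasDerivAt hx).log (hS.pos x hx).ne').sub ((hRd x).hasDerivAt.log hRx.ne')
  · filter_upwards [hnear] with x ⟨hx, hRx⟩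
    exact ((hS.continuousOn_deriv.continuousAt (isOpen_Ioo.mem_nhds hx)).div
      (hS.hasDerivAt hx).continuousAt (hS.pos x hx).ne').sub
      (hR'c.continuousAt.div hRd.continuous.continuousAt hRx.ne')

theorem lt_of_deriv_sq_sub_lt_one {R : ℝ → ℝ} (hS : RedhefferCondition a P S) (ha : 0 < a)
    (hS0 : Tendsto (fun x => S x / x) (𝓝[>] 0) (𝓝 1)) (hSa : Tendsto S (𝓝[<] a) (𝓝 0))
    (hR : ContDiff ℝ 2 R) (hRpos : ∀ x ∈ Ioo 0 a, 0 < R x)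
    (hR1 : ∀ x ∈ Ioo 0 a, deriv R x ^ 2 - deriv (deriv R) x * R x < 1)
    (hR0 : Tendsto (fun x => R x / x) (𝓝[>] 0) (𝓝 1)) (hRa : ∀ x ∈ Ioo 0 a, R x ≤ a - x) :
    ∀ x ∈ Ioo 0 a, R x < S x := by
  have hratio : ContinuousOn (fun x => S x / R x) (Ioo 0 a) :=
    hS.continuousOn.div hR.continuous.continuousOn fun x hx => (hRpos x hx).ne'
  have hlim0 : Tendsto (fun x => S x / R x) (𝓝[>] 0) (𝓝 1) := by
    have h := hS0.div hR0 one_ne_zero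
    rw [div_one] at h
    refine h.congr' ?_
    filter_upwards [self_mem_nhdsWithin] with x (hx : 0 < x)
    exact div_div_div_cancel_right₀ hx.ne' _ _
  have hge : ∀ c ∈ Ioo 0 a, 1 ≤ S c / R c := by
    intro c hc
    by_contra! hc1
    -- for `S c / R c < q < 1`, near `a` we have `S ≥ q (a - x) ≥ q R`
    have hq : S c / R c < (S c / R c + 1) / 2 := by linarith
    have hq0 : 0 ≤ (S c / R c + 1) / 2 := by
      have := div_pos (hS.pos c hc) (hRpos c hc); linarith
    obtain ⟨m, hm, hmin⟩ := hratio.exists_isMinOn_Ioo hc (hlim0.eventually_const_lt hc1) <| by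
      filter_upwards [hS.eventually_mul_sub_le ha hSa (by linarith : (S c / R c + 1) / 2 < 1),
        Ioo_mem_nhdsLT ha] with x hx hxI
      refine hq.trans_le ((le_div_iff₀ (hRpos x hxI)).2 ?_)
      exact (mul_le_mul_of_nonneg_left (hRa x hxI) hq0).trans hx
    have hSRm : S m / R m < 1 := (hmin hc).trans_lt hc1
    exact hS.not_isLocalMin_div hR hm (hRpos m hm) (hR1 m hm)
      ((div_lt_one (hRpos m hm)).1 hSRm).le (hmin.isLocalMin (isOpen_Ioo.mem_nhds hm))
  intro c hc
  by_contra! hSR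
  have hmin : IsMinOn (fun x => S x / R x) (Ioo 0 a) c := fun x hx =>
    ((div_le_one (hRpos c hc)).2 hSR).trans (hge x hx)
  exact hS.not_isLocalMin_div hR hc (hRpos c hc) (hR1 c hc) hSR
    (hmin.isLocalMin (isOpen_Ioo.mem_nhds hc))

end RedhefferCondition

theorem redheffer_strict_on_Ioo (a : ℝ) (ha : 0 < a) (P : Set ℝ)
    (hPfin : P.Finite) (hPsub : P ⊆ Ioo 0 a) (S : ℝ → ℝ)
    (hS1 : ∀ x ∈ Ici (0:ℝ), S (-x) = -S x ∧ S (a + x) = -S x)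
    (hS2 : ∀ x ∈ Ioo 0 a, 0 < S x ∧ S x < x)
    (hS3 : ContinuousOn S (Icc 0 a) ∧ ContDiffOn ℝ 1 S (Ico 0 a) ∧
      ContDiffOn ℝ 2 S (Ico 0 a \ P))
    (hS4 : ∀ x ∈ Ico 0 a \ P, (deriv S x) ^ 2 - deriv (deriv S) x * S x ≥ 1) :
    ∀ x ∈ Ioo 0 a, (a ^ 2 - x ^ 2) / (a ^ 2 + x ^ 2) < S x / x := by
  obtain ⟨hcont, hC1, hC2⟩ := hS3
  have hS0 : S 0 = 0 := by linarith [show S 0 = -S 0 by simpa using (hS1 0 self_mem_Ici).1]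
  have hSa : S a = 0 := by simpa [hS0] using (hS1 0 self_mem_Ici).2
  have hS : RedhefferCondition a P S :=
    ⟨hPfin, hC1.mono Ioo_subset_Ico_self, hC2.mono (sdiff_subset_sdiff_left Ioo_subset_Ico_self),
      fun x hx => (hS2 x hx).1, fun x hx => hS4 x ⟨Ioo_subset_Ico_self hx.1, hx.2⟩⟩
  have hS'0 : HasDerivAt S 1 0 := by
    refine hasDerivAt_one_of_one_le_sq_deriv hS0 ?_ ?_
    · filter_upwards [Ioo_mem_nhdsGT ha] with x hx using ⟨(hS2 x hx).1.le, (hS2 x hx).2.le⟩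
    · simpa [hS0] using hS4 0 ⟨left_mem_Ico.2 ha, fun h => (hPsub h).1.false⟩
  have hlim : Tendsto S (𝓝[<] a) (𝓝 0) := by
    rw [← hSa, ← nhdsWithin_Ioo_eq_nhdsLT ha]
    exact (hcont a (right_mem_Icc.2 ha.le)).mono Ioo_subset_Icc_self
  have hR0 : Tendsto (fun x => redhefferBound a x / x) (𝓝[>] 0) (𝓝 1) :=
    ((hasDerivAt_redhefferBound_zero ha.ne').tendsto_div_self (by simp [redhefferBound])).mono_left
      (nhdsGT_le_nhdsNE 0)
  have hlt := hS.lt_of_deriv_sq_sub_lt_one ha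
    ((hS'0.tendsto_div_self hS0).mono_left (nhdsGT_le_nhdsNE 0)) hlim
    (contDiff_redhefferBound ha.ne') (fun _ => redhefferBound_pos)
    (fun _ => deriv_sq_sub_deriv_deriv_mul_redhefferBound_lt_one) hR0
    (fun x _ => redhefferBound_le_sub ha x)
  intro x hx
  rw [← mul_div_cancel_left₀ ((a ^ 2 - x ^ 2) / (a ^ 2 + x ^ 2)) hx.1.ne']
  exact div_lt_div_of_pos_right (hlt x hx) hx.1
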